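/- Let d ∈ {0,...,α}^ℕ and let M = (m_k) be a d-positive sequence (d_{m_k} > 0 for all k). Then ω(M), the infinite concatenation of the blocks d₁⋯d_{m_k}⁻, satisfies: limsup_{n→∞} σ^n(ω(M)) = d (in the lexicographic/metric sense that every prefix d₁⋯d_j of d occurs at infinitely many positions in ω(M)) if and only if limsup_{k→∞} m_k = ∞. -/

import Mathlib

/-- Digit at position `n` (0-based) of the concatenation of the blocks
`d₁⋯d_{m k}⁻, d₁⋯d_{m (k+1)}⁻, ...`; here `d` is 1-based (`d i` = `d_i`) and
`d₁⋯d_m⁻` denotes `d₁⋯d_{m-1}(d_m - 1)`. -/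
def omegaAux (d m : ℕ → ℕ) : ℕ → ℕ → ℕ
  | k, n =>
    if n + 1 < m k then d (n + 1)
    else if n + 1 = m k then d (m k) - 1
    else if m k = 0 then 0
    else omegaAux d m (k + 1) (n - m k)
termination_by k n => n
decreasing_by simp_wf; omega

/-- `ω(M)` = the infinite concatenation `d₁⋯d_{m₀}⁻ d₁⋯d_{m₁}⁻ ⋯`. -/
def omegaM (d m : ℕ → ℕ) (n : ℕ) : ℕ := omegaAux d m 0 n

lemma omegaAux_lt (d m : ℕ → ℕ) (k i : ℕ) (h : i + 1 < m k) :
    omegaAux d m k i = d (i + 1) := by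
  rw [omegaAux]
  simp [h]

lemma omegaAux_end (d m : ℕ → ℕ) (k : ℕ) (h : 1 ≤ m k) :
    omegaAux d m k (m k - 1) = d (m k) - 1 := by
  rw [omegaAux]
  have h1 : ¬ (m k - 1 + 1 < m k) := by omega
  have h2 : m k - 1 + 1 = m k := by omega
  simp [h1, h2]

lemma omegaAux_step (d m : ℕ → ℕ) (k i : ℕ) (h : 1 ≤ m k) :
    omegaAux d m k (m k + i) = omegaAux d m (k + 1) i := by
  rw [omegaAux]
  have h1 : ¬ (m k + i + 1 < m k) := by omega
  have h2 : ¬ (m k + i + 1 = m k) := by omega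
  have h3 : ¬ (m k = 0) := by omega
  have h4 : m k + i - m k = i := by omega
  simp [h1, h2, h3, h4]

lemma omegaAux_shift (d m : ℕ → ℕ) (hm : ∀ j, 1 ≤ m j) :
    ∀ k a i, omegaAux d m a ((∑ t ∈ Finset.range k, m (a + t)) + i)
      = omegaAux d m (a + k) i := by
  intro k
  induction k with
  | zero => intro a i; simp
  | succ k ih =>
    intro a i
    have hsum : (∑ t ∈ Finset.range (k + 1), m (a + t))
        = m a + ∑ t ∈ Finset.range k, m (a + 1 + t) := by
      rw [Finset.sum_range_succ']
      simp [Nat.add_comm]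
      apply Finset.sum_congr rfl
      intro t _
      congr 1
      omega
    rw [hsum, Nat.add_assoc, omegaAux_step d m a _ (hm a), ih (a + 1)]
    congr 1
    omega

lemma omegaM_block (d m : ℕ → ℕ) (hm : ∀ j, 1 ≤ m j) (k i : ℕ) :
    omegaM d m ((∑ t ∈ Finset.range k, m t) + i) = omegaAux d m k i := by
  have := omegaAux_shift d m hm k 0 i
  simpa [omegaM] using this

lemma exists_block (m : ℕ → ℕ) (hm : ∀ j, 1 ≤ m j) (n : ℕ) :
    ∃ k r, r < m k ∧ n = (∑ t ∈ Finset.range k, m t) + r := by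
  induction n with
  | zero => exact ⟨0, 0, hm 0, rfl⟩
  | succ n ih =>
    obtain ⟨k, r, hr, hn⟩ := ih
    by_cases h : r + 1 < m k
    · exact ⟨k, r + 1, h, by omega⟩
    · refine ⟨k + 1, 0, hm _, ?_⟩
      rw [Finset.sum_range_succ]
      omega

/-- Given that every shifted tail of `ω(M)` is lexicographically `< d`,
`limsup σⁿ(ω(M)) = d` — i.e. every prefix `d₁⋯d_j` of `d` occurs at infinitely many
positions of `ω(M)` — if and only if `limsup m_k = ∞`, i.e. `(m_k)` is unbounded. -/
theorem stmt8 (α : ℕ) (hα : 1 ≤ α) (d : ℕ → ℕ) (hd : ∀ i, d i ≤ α)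
    (m : ℕ → ℕ) (hmpos : ∀ k, 1 ≤ m k) (hmd : ∀ k, 0 < d (m k))
    (hlt : ∀ n : ℕ, ∃ i : ℕ, (∀ j < i, omegaM d m (n + j) = d (j + 1)) ∧
      omegaM d m (n + i) < d (i + 1)) :
    (∀ j N : ℕ, ∃ n ≥ N, ∀ i < j, omegaM d m (n + i) = d (i + 1)) ↔
      (∀ B : ℕ, ∃ k, B ≤ m k) := by
  constructor
  · -- unbounded matches → m unbounded
    intro H B
    by_contra hB
    push_neg at hB
    -- hB : ∀ k, m k < B
    obtain ⟨n, -, hmatch⟩ := H B 0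
    obtain ⟨k, r, hr, hn⟩ := exists_block m hmpos n
    have hS : ∀ i, omegaM d m ((∑ t ∈ Finset.range k, m t) + i) = omegaAux d m k i :=
      fun i => omegaM_block d m hmpos k i
    have hend : omegaM d m ((∑ t ∈ Finset.range k, m t) + (m k - 1)) = d (m k) - 1 := by
      rw [hS, omegaAux_end d m k (hmpos k)]
    rcases Nat.eq_zero_or_pos r with hr0 | hr1
    · -- r = 0 : the match forces d (m k) = d (m k) - 1
      subst hr0
      have h1 := hmatch (m k - 1) (by have := hB k; omega)
      have h2 : n + (m k - 1) = (∑ t ∈ Finset.range k, m t) + (m k - 1) := by omega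
      rw [h2, hend] at h1
      have h3 : m k - 1 + 1 = m k := by have := hmpos k; omega
      rw [h3] at h1
      have := hmd k
      omega
    · -- r ≥ 1
      -- E2 : d (m k - r) = d (m k) - 1
      have e2 : d (m k - r) = d (m k) - 1 := by
        have h1 := hmatch (m k - r - 1) (by have := hB k; omega)
        have h2 : n + (m k - r - 1) = (∑ t ∈ Finset.range k, m t) + (m k - 1) := by omega
        rw [h2, hend] at h1
        have h3 : m k - r - 1 + 1 = m k - r := by omega
        rw [h3] at h1
        omega
      -- E1 : shifted agreement inside the block
      have e1 : ∀ s, s + 1 < m k - r → d (s + 1) = d (r + s + 1) := by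
        intro s hs
        have h1 := hmatch s (by have := hB k; omega)
        have h2 : n + s = (∑ t ∈ Finset.range k, m t) + (r + s) := by omega
        rw [h2, hS, omegaAux_lt d m k (r + s) (by omega)] at h1
        omega
      obtain ⟨i, hieq, hilt⟩ := hlt (n + r)
      have hv : ∀ t, t ≤ m k - r - 1 → omegaM d m (n + r + t) = d (r + t + 1) := by
        intro t ht
        have h1 := hmatch (r + t) (by have := hB k; omega)
        have h2 : n + (r + t) = n + r + t := by omega
        rwa [h2] at h1
      rcases lt_trichotomy i (m k - r - 1) with h | h | h
      · have h1 := hilt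
        have h2 := hv i (by omega)
        have h3 := e1 i (by omega)
        omega
      · subst h
        have h1 := hilt
        have h2 := hv (m k - r - 1) (le_refl _)
        have h3 : r + (m k - r - 1) + 1 = m k := by omega
        rw [h3] at h2
        have h4 : m k - r - 1 + 1 = m k - r := by omega
        rw [h4] at h1
        have := hmd k
        omega
      · have h1 := hieq (m k - r - 1) h
        have h2 := hv (m k - r - 1) (le_refl _)
        have h3 : r + (m k - r - 1) + 1 = m k := by omega
        rw [h3] at h2
        have h4 : m k - r - 1 + 1 = m k - r := by omega
        rw [h4] at h1
        have := hmd k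
        omega
  · -- m unbounded → every prefix occurs beyond every N
    intro hub j N
    obtain ⟨k, hk⟩ := hub (max (j + 1) ((Finset.range N).sup m + 1))
    have hkj : j + 1 ≤ m k := le_trans (le_max_left _ _) hk
    have hkN : N ≤ k := by
      by_contra h
      push_neg at h
      have h1 : m k ≤ (Finset.range N).sup m :=
        Finset.le_sup (Finset.mem_range.2 h)
      have h2 : (Finset.range N).sup m + 1 ≤ m k := le_trans (le_max_right _ _) hk
      omega
    refine ⟨∑ t ∈ Finset.range k, m t, ?_, ?_⟩
    · have h1 : k ≤ ∑ t ∈ Finset.range k, m t := by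
        calc k = ∑ t ∈ Finset.range k, 1 := by simp
        _ ≤ ∑ t ∈ Finset.range k, m t := Finset.sum_le_sum (fun t _ => hmpos t)
      omega
    · intro i hi
      rw [omegaM_block d m hmpos k i, omegaAux_lt d m k i (by omega)]
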